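/- arXiv:1403.6689 — 6 statements merged into one kernel-verified Lean document; each statement's English description precedes it below -/
import Mathlib

section
/- For any infinitary propositional formula F and any interpretation I (a set of atoms), I satisfies the reduct F^I if and only if I satisfies F. -/
open Classical

/-- Infinitary propositional formulas over a signature `σ`: atoms, set-indexed
conjunctions and disjunctions (represented by families indexed by a type,
which corresponds exactly to *bounded* sets of formulas in the hierarchy),
and implication. -/
inductive IForm (σ : Type) : Type 1
  | atom : σ → IForm σ
  | conj : (ι : Type) → (ι → IForm σ) → IForm σ
  | disj : (ι : Type) → (ι → IForm σ) → IForm σ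
  | impl : IForm σ → IForm σ → IForm σ

namespace IForm

variable {σ : Type}

/-- `⊥` is the empty disjunction. -/
def bot : IForm σ := disj Empty Empty.elim

/-- `¬F` abbreviates `F → ⊥`. -/
def neg (F : IForm σ) : IForm σ := impl F bot

/-- Binary conjunction `F ∧ G` as `{F, G}^∧`. -/
def and2 (F G : IForm σ) : IForm σ := conj Bool (fun b => cond b F G)

/-- Binary disjunction `F ∨ G` as `{F, G}^∨`. -/
def or2 (F G : IForm σ) : IForm σ := disj Bool (fun b => cond b F G)

/-- Ternary disjunction. -/
def or3 (F G H : IForm σ) : IForm σ := disj (Fin 3) (fun i => [F, G, H].get i)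

/-- `F ↔ G` abbreviates `(F → G) ∧ (G → F)`. -/
def biimp (F G : IForm σ) : IForm σ := and2 (impl F G) (impl G F)

/-- Satisfaction of an infinitary formula by an interpretation `I ⊆ σ`. -/
def sat (I : Set σ) : IForm σ → Prop
  | atom p => p ∈ I
  | conj _ f => ∀ i, sat I (f i)
  | disj _ f => ∃ i, sat I (f i)
  | impl F G => sat I F → sat I G

/-- The reduct `F^I` of a formula w.r.t. an interpretation `I`. -/
noncomputable def reduct (I : Set σ) : IForm σ → IForm σ
  | atom p => if p ∈ I then atom p else bot
  | conj ι f => conj ι (fun i => reduct I (f i))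
  | disj ι f => disj ι (fun i => reduct I (f i))
  | impl F G => if sat I (impl F G) then impl (reduct I F) (reduct I G) else bot

/-- `I` satisfies a set of formulas if it satisfies all its elements. -/
def satSet (I : Set σ) (H : Set (IForm σ)) : Prop := ∀ F ∈ H, sat I F

/-- `I` is a stable model of a set `H` of formulas if it is minimal w.r.t.
set inclusion among the interpretations satisfying the reduct `H^I`. -/
def StableModel (I : Set σ) (H : Set (IForm σ)) : Prop :=
  satSet I (reduct I '' H) ∧ ∀ J : Set σ, satSet J (reduct I '' H) → J ⊆ I → J = I

noncomputable instance : DecidableEq (IForm σ) := Classical.decEq _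

/-- The basic infinitary system of natural deduction: sequents `Γ ⇒ F` where
`Γ` is a finite set of infinitary formulas.  Axiom `F ⇒ F`; introduction and
elimination rules for set-indexed conjunction and disjunction and for
implication; weakening. -/
inductive Deriv : Finset (IForm σ) → IForm σ → Prop
  | ax (F : IForm σ) : Deriv {F} F
  | conjI (Γ : Finset (IForm σ)) (ι : Type) (f : ι → IForm σ) :
      (∀ i, Deriv Γ (f i)) → Deriv Γ (conj ι f)
  | conjE (Γ : Finset (IForm σ)) (ι : Type) (f : ι → IForm σ) (i : ι) :
      Deriv Γ (conj ι f) → Deriv Γ (f i)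
  | disjI (Γ : Finset (IForm σ)) (ι : Type) (f : ι → IForm σ) (i : ι) :
      Deriv Γ (f i) → Deriv Γ (disj ι f)
  | disjE (Γ Δ : Finset (IForm σ)) (ι : Type) (f : ι → IForm σ) (F : IForm σ) :
      Deriv Γ (disj ι f) → (∀ i, Deriv (insert (f i) Δ) F) → Deriv (Γ ∪ Δ) F
  | implI (Γ : Finset (IForm σ)) (F G : IForm σ) :
      Deriv (insert F Γ) G → Deriv Γ (impl F G)
  | implE (Γ Δ : Finset (IForm σ)) (F G : IForm σ) :
      Deriv Γ F → Deriv Δ (impl F G) → Deriv (Γ ∪ Δ) G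
  | weak (Γ Δ : Finset (IForm σ)) (F : IForm σ) :
      Deriv Γ F → Deriv (Γ ∪ Δ) F

end IForm

namespace IForm

variable {σ : Type}

theorem not_sat_bot (I : Set σ) : ¬ sat I (bot : IForm σ) := fun ⟨i, _⟩ => i.elim

theorem sat_reduct_atom (I : Set σ) (p : σ) : sat I (reduct I (atom p)) ↔ p ∈ I := by
  unfold reduct
  split_ifs with hp
  · exact iff_of_true hp hp
  · exact iff_of_false (not_sat_bot I) hp

end IForm

/-- For any infinitary formula `F` and interpretation `I`,
`I` satisfies the reduct `F^I` iff `I` satisfies `F`. -/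
theorem sat_reduct_iff_sat {σ : Type} (F : IForm σ) (I : Set σ) :
    IForm.sat I (IForm.reduct I F) ↔ IForm.sat I F := by
  induction F with
  | atom p => exact IForm.sat_reduct_atom I p
  | conj ι f ih => exact forall_congr' ih
  | disj ι f ih => exact exists_congr ih
  | impl F G ihF ihG =>
    unfold IForm.reduct
    split_ifs with hFG
    · exact imp_congr ihF ihG
    · exact iff_of_false (IForm.not_sat_bot I) hFG
end

section
/- In the basic infinitary natural deduction system, the formula F_0 ∧ ⋀_{i≥0}(F_i → F_{i+1}) is equivalent (i.e., the biconditional is a theorem) to ⋀_{i≥0} F_i, for any bounded family of infinitary formulas (F_i) indexed by the natural numbers. -/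
open Classical

namespace IForm.Deriv

variable {σ : Type} {Γ Δ : Finset (IForm σ)} {F G : IForm σ}

theorem mono (h : Deriv Γ F) (hs : Γ ⊆ Δ) : Deriv Δ F := by
  simpa only [Finset.union_eq_right.mpr hs] using weak Γ Δ F h

theorem hyp (h : F ∈ Γ) : Deriv Γ F :=
  (ax F).mono (Finset.singleton_subset_iff.mpr h)

theorem mp (hF : Deriv Γ F) (hFG : Deriv Γ (impl F G)) : Deriv Γ G := by
  simpa only [Finset.union_self] using implE Γ Γ F G hF hFG

theorem impl_of_right (h : Deriv Γ G) : Deriv Γ (impl F G) :=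
  implI Γ F G (h.mono (Finset.subset_insert F Γ))

theorem and2I (hF : Deriv Γ F) (hG : Deriv Γ G) : Deriv Γ (and2 F G) :=
  conjI Γ Bool _ fun b => by cases b <;> assumption

theorem and2_left (h : Deriv Γ (and2 F G)) : Deriv Γ F :=
  conjE Γ Bool _ true h

theorem and2_right (h : Deriv Γ (and2 F G)) : Deriv Γ G :=
  conjE Γ Bool _ false h

theorem biimpI (hFG : Deriv Γ (impl F G)) (hGF : Deriv Γ (impl G F)) :
    Deriv Γ (biimp F G) :=
  and2I hFG hGF

/-- The induction is carried out in the metatheory: each `F n` gets its own finite derivation,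
and the infinitary `∧`-introduction collects them. -/
theorem conj_of_induction {F : ℕ → IForm σ} (h0 : Deriv Γ (F 0))
    (hstep : Deriv Γ (conj ℕ fun i => impl (F i) (F (i + 1)))) : Deriv Γ (conj ℕ F) :=
  conjI Γ ℕ F fun n => by
    induction n with
    | zero => exact h0
    | succ n ih => exact ih.mp (conjE Γ ℕ _ n hstep)

theorem conj_impl_succ_of_conj {F : ℕ → IForm σ} (h : Deriv Γ (conj ℕ F)) :
    Deriv Γ (conj ℕ fun i => impl (F i) (F (i + 1))) :=
  conjI Γ ℕ _ fun i => impl_of_right (conjE Γ ℕ F (i + 1) h)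

end IForm.Deriv

open IForm in
/-- In the basic system, `F₀ ∧ ⋀_{i≥0}(F_i → F_{i+1})` is
equivalent to `⋀_{i≥0} F_i`, for any family `(F_i)` of infinitary formulas
indexed by the natural numbers. -/
theorem basic_equiv_induction {σ : Type} (F : ℕ → IForm σ) :
    Deriv ∅ (biimp
      (and2 (F 0) (conj ℕ fun i => impl (F i) (F (i + 1))))
      (conj ℕ F)) := by
  refine Deriv.biimpI (Deriv.implI _ _ _ ?_) (Deriv.implI _ _ _ ?_)
  · exact Deriv.conj_of_induction (Deriv.hyp (Finset.mem_insert_self _ _)).and2_left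
      (Deriv.hyp (Finset.mem_insert_self _ _)).and2_right
  · have hAll := Deriv.hyp (Finset.mem_insert_self (conj ℕ F) ∅)
    exact Deriv.and2I (Deriv.conjE _ ℕ F 0 hAll) (Deriv.conj_impl_succ_of_conj hAll)
end

section
/- If an infinitary formula F is a theorem of the basic system, then every instance φF obtained by a substitution φ is also a theorem of the basic system (substitution property). -/
open Classical

namespace IForm

/-- Application of a substitution `φ` (a family of formulas over `σ` indexed by
a disjoint signature `σ'`) to a formula over `σ ∪ σ'` (modeled as `σ ⊕ σ'`):
atoms of `σ` are unchanged, atoms `q` of `σ'` are replaced by `φ q`, and the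
substitution commutes with the connectives. -/
def subst {σ σ' : Type} (φ : σ' → IForm σ) : IForm (σ ⊕ σ') → IForm σ
  | atom (Sum.inl p) => atom p
  | atom (Sum.inr q) => φ q
  | conj ι f => conj ι fun i => subst φ (f i)
  | disj ι f => disj ι fun i => subst φ (f i)
  | impl F G => impl (subst φ F) (subst φ G)

end IForm

namespace IForm

variable {σ σ' : Type} (φ : σ' → IForm σ)

/- Every rule of the system is closed under substitution; the induction needs arbitrary
contexts because `implI` and `disjE` discharge hypotheses. -/
theorem Deriv.image_subst {Γ : Finset (IForm (σ ⊕ σ'))} {F : IForm (σ ⊕ σ')}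
    (h : Deriv Γ F) : Deriv (Γ.image (subst φ)) (subst φ F) := by
  induction h with
  | ax F => rw [Finset.image_singleton]; exact .ax _
  | conjI Γ ι f _ ih => exact .conjI _ ι _ ih
  | conjE Γ ι f i _ ih => exact .conjE _ ι _ i ih
  | disjI Γ ι f i _ ih => exact .disjI _ ι _ i ih
  | disjE Γ Δ ι f F _ _ ihDisj ihCases =>
    rw [Finset.image_union]
    exact .disjE _ _ ι _ _ ihDisj fun i => by simpa only [Finset.image_insert] using ihCases i
  | implI Γ F G _ ih => exact .implI _ _ _ (by simpa only [Finset.image_insert] using ih)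
  | implE Γ Δ F G _ _ ihF ihImpl => rw [Finset.image_union]; exact .implE _ _ _ _ ihF ihImpl
  | weak Γ Δ F _ ih => rw [Finset.image_union]; exact .weak _ _ _ ih

end IForm

/-- substitution property: If a formula `F` over `σ ∪ σ'` is a
theorem of the basic system, then so is every instance `φF` obtained by a
substitution `φ`. -/
theorem basic_substitution {σ σ' : Type} (φ : σ' → IForm σ)
    (F : IForm (σ ⊕ σ')) (h : IForm.Deriv ∅ F) :
    IForm.Deriv ∅ (IForm.subst φ F) := by
  simpa only [Finset.image_empty] using h.image_subst φ
end

section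
/- For any infinitary formula F and any interpretation I, if I does not satisfy F then the sequent F^I ⇒ ⊥ is a theorem of the basic system. -/
open Classical

namespace IForm.Deriv

variable {σ : Type}

theorem cut {Γ : Finset (IForm σ)} {A B : IForm σ} (hA : Deriv Γ A) (hB : Deriv {A} B) :
    Deriv Γ B := by
  simpa using implE Γ ∅ A B hA (implI ∅ A B (by simpa using hB))

theorem conj_left {ι : Type} {f : ι → IForm σ} {G : IForm σ} (i : ι) (h : Deriv {f i} G) :
    Deriv {conj ι f} G :=
  cut (conjE _ ι f i (ax _)) h

theorem disj_left {ι : Type} {f : ι → IForm σ} {G : IForm σ} (h : ∀ i, Deriv {f i} G) :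
    Deriv {disj ι f} G := by
  simpa using disjE {disj ι f} ∅ ι f G (ax _) (fun i => by simpa using h i)

end IForm.Deriv

/-- For any infinitary formula `F` and interpretation `I`, if
`I` does not satisfy `F`, then the sequent `F^I ⇒ ⊥` is a theorem of the
basic system. -/
theorem reduct_refutes {σ : Type} (F : IForm σ) (I : Set σ)
    (h : ¬ IForm.sat I F) :
    IForm.Deriv {IForm.reduct I F} IForm.bot := by
  induction F with
  | atom p =>
    rw [IForm.reduct, if_neg (show p ∉ I from h)]
    exact IForm.Deriv.ax _
  | conj ι f ih =>
    obtain ⟨i, hi⟩ := not_forall.mp h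
    exact IForm.Deriv.conj_left i (ih i hi)
  | disj ι f ih =>
    exact IForm.Deriv.disj_left fun i => ih i fun hi => h ⟨i, hi⟩
  | impl F G =>
    rw [IForm.reduct, if_neg h]
    exact IForm.Deriv.ax _
end

section
/- If an infinitary formula F is a theorem of the basic system, then for any set 𝓗 of infinitary formulas, 𝓗 ∪ {F} has the same stable models as 𝓗. -/
/-!
Read `J ⊨ F^I` for `J ⊆ I` as satisfaction in the here-and-there model `(J, I)`. Every rule of
the basic system preserves it, the implication introduction because the case `J = I` of the
premise makes the implication classically true in `I`, so its reduct is not `⊥`. Hence a theorem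
`F` of the basic system has `J ⊨ F^I` for all `J ⊆ I`, and adding `F` to `𝓗` changes neither
whether `I` satisfies the reduct nor which `J ⊆ I` satisfy it.
-/

open Classical

namespace IForm

variable {σ : Type}

theorem reduct_impl_of_sat {I : Set σ} {F G : IForm σ} (h : sat I (impl F G)) :
    reduct I (impl F G) = impl (reduct I F) (reduct I G) := by
  rw [reduct, if_pos h]

theorem reduct_impl_of_not_sat {I : Set σ} {F G : IForm σ} (h : ¬ sat I (impl F G)) :
    reduct I (impl F G) = bot := by
  rw [reduct, if_neg h]

theorem sat_reduct_self_iff (I : Set σ) (F : IForm σ) : sat I (reduct I F) ↔ sat I F := by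
  induction F with
  | atom p => by_cases hp : p ∈ I <;> simp [reduct, sat, hp, not_sat_bot]
  | conj ι f ih => simp only [reduct, sat, ih]
  | disj ι f ih => simp only [reduct, sat, ih]
  | impl F G ihF ihG =>
    by_cases h : sat I (impl F G)
    · rw [reduct_impl_of_sat h]
      exact ⟨fun _ => h, fun h' hF => ihG.2 (h' (ihF.1 hF))⟩
    · rw [reduct_impl_of_not_sat h]
      exact iff_of_false (not_sat_bot I) h

theorem sat_of_sat_reduct {I J : Set σ} (F : IForm σ) :
    sat J (reduct I F) → sat I F := by
  induction F with
  | atom p => by_cases hp : p ∈ I <;> simp [reduct, sat, hp, not_sat_bot]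
  | conj ι f ih => exact fun h i => ih i (h i)
  | disj ι f ih => exact fun ⟨i, hi⟩ => ⟨i, ih i hi⟩
  | impl F G _ _ =>
    by_cases h : sat I (impl F G)
    · exact fun _ => h
    · rw [reduct_impl_of_not_sat h]
      exact fun hbot => (not_sat_bot J hbot).elim

theorem sat_reduct_of_deriv {I : Set σ} {Γ : Finset (IForm σ)} {F : IForm σ} (d : Deriv Γ F)
    {J : Set σ} (hJI : J ⊆ I) (hΓ : ∀ G ∈ Γ, sat J (reduct I G)) : sat J (reduct I F) := by
  induction d generalizing J with
  | ax F => exact hΓ F (Finset.mem_singleton_self F)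
  | conjI _ _ _ _ ih => exact fun i => ih i hJI hΓ
  | conjE _ _ _ i _ ih => exact ih hJI hΓ i
  | disjI _ _ _ i _ ih => exact ⟨i, ih hJI hΓ⟩
  | disjE Γ Δ _ f _ _ _ ihΓ ihΔ =>
    obtain ⟨i, hi⟩ := ihΓ hJI fun G hG => hΓ G (Finset.mem_union_left _ hG)
    refine ihΔ i hJI fun G hG => ?_
    rcases Finset.mem_insert.mp hG with rfl | hG
    · exact hi
    · exact hΓ G (Finset.mem_union_right _ hG)
  | implI Γ F G _ ih =>
    have hI : sat I (impl F G) := by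
      intro hF
      refine (sat_reduct_self_iff I G).1 (ih subset_rfl fun G' hG' => ?_)
      rcases Finset.mem_insert.mp hG' with rfl | hG'
      · exact (sat_reduct_self_iff I G').2 hF
      · exact (sat_reduct_self_iff I G').2 (sat_of_sat_reduct G' (hΓ G' hG'))
    rw [reduct_impl_of_sat hI]
    intro hF
    refine ih hJI fun G' hG' => ?_
    rcases Finset.mem_insert.mp hG' with rfl | hG'
    · exact hF
    · exact hΓ G' hG'
  | implE Γ Δ F G _ _ ihF ihFG =>
    have hF := ihF hJI fun G hG => hΓ G (Finset.mem_union_left _ hG)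
    have hFG := ihFG hJI fun G hG => hΓ G (Finset.mem_union_right _ hG)
    by_cases h : sat I (impl F G)
    · rw [reduct_impl_of_sat h] at hFG
      exact hFG hF
    · rw [reduct_impl_of_not_sat h] at hFG
      exact (not_sat_bot J hFG).elim
  | weak _ _ _ _ ih => exact ih hJI fun G hG => hΓ G (Finset.mem_union_left _ hG)

theorem satSet_reduct_union_singleton_iff {I J : Set σ} {H : Set (IForm σ)} {F : IForm σ}
    (hF : sat J (reduct I F)) :
    satSet J (reduct I '' (H ∪ {F})) ↔ satSet J (reduct I '' H) := by
  simp [satSet, or_imp, forall_and, hF]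

theorem stableModel_union_singleton_iff {I : Set σ} {H : Set (IForm σ)} {F : IForm σ}
    (hF : ∀ J ⊆ I, sat J (reduct I F)) :
    StableModel I (H ∪ {F}) ↔ StableModel I H := by
  unfold StableModel
  rw [satSet_reduct_union_singleton_iff (hF I subset_rfl)]
  refine and_congr_right fun _ => forall_congr' fun J => ?_
  exact ⟨fun hmin hJ hJI => hmin ((satSet_reduct_union_singleton_iff (hF J hJI)).2 hJ) hJI,
    fun hmin hJ hJI => hmin ((satSet_reduct_union_singleton_iff (hF J hJI)).1 hJ) hJI⟩

end IForm

/-- Main Theorem (a): If a formula `F` is a theorem of the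
basic system, then for any set `𝓗` of infinitary formulas, `𝓗 ∪ {F}` has
the same stable models as `𝓗`. -/
theorem main_theorem_a {σ : Type} (F : IForm σ) (h : IForm.Deriv ∅ F)
    (H : Set (IForm σ)) :
    ∀ I : Set σ, IForm.StableModel I (H ∪ {F}) ↔ IForm.StableModel I H := fun _ =>
  IForm.stableModel_union_singleton_iff fun _ hJI =>
    IForm.sat_reduct_of_deriv h hJI fun _ hG => absurd hG (Finset.notMem_empty _)
end

section
/- In the extended infinitary system, the generalization of the weak law of the excluded middle ⋁_{J⊆I}( ¬⋁_{j∈I∖J} F_j ∧ ¬¬⋀_{j∈J} F_j ) is a theorem, for any non-empty bounded family (F_i)_{i∈I} of infinitary formulas. -/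
open Classical

namespace IForm

variable {σ : Type}

/-- The extended system: the basic system plus the axiom schemas
`F ∨ (F → G) ∨ ¬G` (Hosoi), the converse infinitary De Morgan law
`¬⋀ F → ⋁ ¬F`, and the two converse infinitary distributivity laws
(for non-empty families). -/
inductive DerivE : Finset (IForm σ) → IForm σ → Prop
  | ax (F : IForm σ) : DerivE {F} F
  | conjI (Γ : Finset (IForm σ)) (ι : Type) (f : ι → IForm σ) :
      (∀ i, DerivE Γ (f i)) → DerivE Γ (conj ι f)
  | conjE (Γ : Finset (IForm σ)) (ι : Type) (f : ι → IForm σ) (i : ι) :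
      DerivE Γ (conj ι f) → DerivE Γ (f i)
  | disjI (Γ : Finset (IForm σ)) (ι : Type) (f : ι → IForm σ) (i : ι) :
      DerivE Γ (f i) → DerivE Γ (disj ι f)
  | disjE (Γ Δ : Finset (IForm σ)) (ι : Type) (f : ι → IForm σ) (F : IForm σ) :
      DerivE Γ (disj ι f) → (∀ i, DerivE (insert (f i) Δ) F) → DerivE (Γ ∪ Δ) F
  | implI (Γ : Finset (IForm σ)) (F G : IForm σ) :
      DerivE (insert F Γ) G → DerivE Γ (impl F G)
  | implE (Γ Δ : Finset (IForm σ)) (F G : IForm σ) :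
      DerivE Γ F → DerivE Δ (impl F G) → DerivE (Γ ∪ Δ) G
  | weak (Γ Δ : Finset (IForm σ)) (F : IForm σ) :
      DerivE Γ F → DerivE (Γ ∪ Δ) F
  | hosoi (F G : IForm σ) : DerivE ∅ (or3 F (impl F G) (neg G))
  | demConv (ι : Type) (f : ι → IForm σ) :
      DerivE ∅ (impl (neg (conj ι f)) (disj ι fun i => neg (f i)))
  | distConv1 (ι : Type) [Nonempty ι] (κ : ι → Type) (g : (i : ι) → κ i → IForm σ) :
      DerivE ∅ (impl (conj ι fun i => disj (κ i) (g i))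
                     (disj ((i : ι) → κ i) fun c => conj ι fun i => g i (c i)))
  | distConv2 (ι : Type) [Nonempty ι] (κ : ι → Type) (g : (i : ι) → κ i → IForm σ) :
      DerivE ∅ (impl (conj ((i : ι) → κ i) fun c => disj ι fun i => g i (c i))
                     (disj ι fun i => conj (κ i) (g i)))

/-- The classical extended system: like the extended system, but with the
Hosoi axiom schema replaced by the law of the excluded middle `F ∨ ¬F`. -/
inductive DerivC : Finset (IForm σ) → IForm σ → Prop
  | ax (F : IForm σ) : DerivC {F} F
  | conjI (Γ : Finset (IForm σ)) (ι : Type) (f : ι → IForm σ) :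
      (∀ i, DerivC Γ (f i)) → DerivC Γ (conj ι f)
  | conjE (Γ : Finset (IForm σ)) (ι : Type) (f : ι → IForm σ) (i : ι) :
      DerivC Γ (conj ι f) → DerivC Γ (f i)
  | disjI (Γ : Finset (IForm σ)) (ι : Type) (f : ι → IForm σ) (i : ι) :
      DerivC Γ (f i) → DerivC Γ (disj ι f)
  | disjE (Γ Δ : Finset (IForm σ)) (ι : Type) (f : ι → IForm σ) (F : IForm σ) :
      DerivC Γ (disj ι f) → (∀ i, DerivC (insert (f i) Δ) F) → DerivC (Γ ∪ Δ) F
  | implI (Γ : Finset (IForm σ)) (F G : IForm σ) :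
      DerivC (insert F Γ) G → DerivC Γ (impl F G)
  | implE (Γ Δ : Finset (IForm σ)) (F G : IForm σ) :
      DerivC Γ F → DerivC Δ (impl F G) → DerivC (Γ ∪ Δ) G
  | weak (Γ Δ : Finset (IForm σ)) (F : IForm σ) :
      DerivC Γ F → DerivC (Γ ∪ Δ) F
  | lem (F : IForm σ) : DerivC ∅ (or2 F (neg F))
  | demConv (ι : Type) (f : ι → IForm σ) :
      DerivC ∅ (impl (neg (conj ι f)) (disj ι fun i => neg (f i)))
  | distConv1 (ι : Type) [Nonempty ι] (κ : ι → Type) (g : (i : ι) → κ i → IForm σ) :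
      DerivC ∅ (impl (conj ι fun i => disj (κ i) (g i))
                     (disj ((i : ι) → κ i) fun c => conj ι fun i => g i (c i)))
  | distConv2 (ι : Type) [Nonempty ι] (κ : ι → Type) (g : (i : ι) → κ i → IForm σ) :
      DerivC ∅ (impl (conj ((i : ι) → κ i) fun c => disj ι fun i => g i (c i))
                     (disj ι fun i => conj (κ i) (g i)))

end IForm

/-! Hosoi's axiom with `F := ¬G` yields the weak excluded middle `¬¬G ∨ ¬G` for every `G`;
the converse distributivity law picks, uniformly in `i`, one disjunct `¬¬F i` or `¬F i`.
Taking `J` to be the set of indices where `¬¬F i` was chosen, `¬⋁_{j ∉ J} F j` is immediate,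
and `¬¬⋀_{j ∈ J} F j` follows because the converse De Morgan law turns `¬⋀_{j ∈ J} F j`
into some `¬F j` with `j ∈ J`, contradicting `¬¬F j`. -/

namespace IForm.DerivE

variable {σ : Type} {Γ Δ : Finset (IForm σ)} {F G : IForm σ}

theorem mono (h : DerivE Γ F) (hΓ : Γ ⊆ Δ) : DerivE Δ F := by
  simpa only [Finset.union_eq_right.mpr hΓ] using weak Γ Δ F h

theorem of_mem (h : F ∈ Γ) : DerivE Γ F :=
  (ax F).mono (Finset.singleton_subset_iff.mpr h)

theorem mp (hF : DerivE Γ F) (hFG : DerivE Γ (impl F G)) : DerivE Γ G := by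
  simpa only [Finset.union_self] using implE Γ Γ F G hF hFG

theorem disj_elim {ι : Type} {f : ι → IForm σ} (h : DerivE Γ (disj ι f))
    (hf : ∀ i, DerivE (insert (f i) Γ) G) : DerivE Γ G := by
  simpa only [Finset.union_self] using disjE Γ Γ ι f G h hf

theorem weak_em (G : IForm σ) : DerivE ∅ (or2 (neg (neg G)) (neg G)) := by
  refine (hosoi (neg G) G).disj_elim fun i => ?_
  fin_cases i
  · exact disjI _ Bool _ false (of_mem (Finset.mem_insert_self _ _))
  · refine disjI _ Bool _ true (implI _ _ _ ?_)
    have hnG : DerivE {neg G, impl (neg G) G} (neg G) := of_mem (by simp)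
    exact (hnG.mp (of_mem (by simp))).mp hnG
  · exact disjI _ Bool _ false (of_mem (Finset.mem_insert_self _ _))

theorem distrib_choice {ι : Type} [Nonempty ι] {κ : ι → Type}
    {g : (i : ι) → κ i → IForm σ}
    (h : DerivE Γ (conj ι fun i => disj (κ i) (g i))) :
    DerivE Γ (disj ((i : ι) → κ i) fun c => conj ι fun i => g i (c i)) :=
  h.mp ((distConv1 ι κ g).mono (Finset.empty_subset Γ))

theorem neg_disj_of_neg {ι : Type} {f : ι → IForm σ} (h : ∀ i, DerivE Γ (neg (f i))) :
    DerivE Γ (neg (disj ι f)) :=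
  implI _ _ _ <| (of_mem (Finset.mem_insert_self _ _)).disj_elim fun i =>
    (of_mem (Finset.mem_insert_self _ _)).mp
      ((h i).mono ((Finset.subset_insert _ _).trans (Finset.subset_insert _ _)))

theorem neg_neg_conj_of_neg_neg {ι : Type} {f : ι → IForm σ}
    (h : ∀ i, DerivE Γ (neg (neg (f i)))) :
    DerivE Γ (neg (neg (conj ι f))) :=
  implI _ _ _ <| ((of_mem (Finset.mem_insert_self _ _)).mp
      ((demConv ι f).mono (Finset.empty_subset _))).disj_elim fun i =>
    (of_mem (Finset.mem_insert_self _ _)).mp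
      ((h i).mono ((Finset.subset_insert _ _).trans (Finset.subset_insert _ _)))

end IForm.DerivE

open IForm in
/-- In the extended system, the generalization of the weak law
of the excluded middle `⋁_{J⊆I}( ¬⋁_{j∈I∖J} F_j ∧ ¬¬⋀_{j∈J} F_j )` is a
theorem, for any non-empty family `(F_i)_{i∈I}` of formulas. -/
theorem extended_weak_lem {σ : Type} (I : Type) [Nonempty I] (F : I → IForm σ) :
    DerivE ∅ (disj (Set I) fun J => and2
      (neg (disj {j : I // j ∉ J} fun j => F j.1))
      (neg (neg (conj {j : I // j ∈ J} fun j => F j.1)))) := by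
  have hchoice : DerivE ∅ (disj (I → Bool) fun c =>
      conj I fun i => cond (c i) (neg (neg (F i))) (neg (F i))) :=
    (DerivE.conjI ∅ I _ fun i => DerivE.weak_em (F i)).distrib_choice
  refine hchoice.disj_elim fun c => DerivE.disjI _ _ _ {i | c i = true} ?_
  have hc (i : I) : DerivE (insert (conj I fun i => cond (c i) (neg (neg (F i))) (neg (F i))) ∅)
      (cond (c i) (neg (neg (F i))) (neg (F i))) :=
    DerivE.conjE _ I _ i (DerivE.of_mem (Finset.mem_insert_self _ _))
  refine DerivE.conjI _ _ _ fun b => ?_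
  cases b
  · refine DerivE.neg_neg_conj_of_neg_neg fun j => ?_
    simpa only [show c j.1 = true from j.2, cond_true] using hc j.1
  · refine DerivE.neg_disj_of_neg fun j => ?_
    simpa only [Bool.eq_false_iff.mpr j.2, cond_false] using hc j.1
end
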